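/- For every integer n ≥ 0, multiplication by ξ₁^{2^n} is injective on C(n), and the kernel of the canonical surjection C(n) = 𝒜/J(n) → 𝒜/I(n) = A(n) is exactly the principal ideal of C(n) generated by ξ₁^{2^n}; that is, there is a short exact sequence 0 → C(n) →(·ξ₁^{2^n}) C(n) → A(n) → 0. (Underlying module statement of the paper's Lemma producing the short exact sequence of bicomodules, case ℓ = 2.) -/

import Mathlib

open MvPolynomial TensorProduct

set_option synthInstance.maxHeartbeats 1000000
set_option maxHeartbeats 1000000

noncomputable section

/-- Variables of the dual motivic Steenrod algebra: `.inl i` is `τᵢ`, `.inr i` is `ξ_{i+1}`. -/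
abbrev MotVar : Type := ℕ ⊕ ℕ

variable (k : Type) [CommRing k]

/-- `τᵢ` as a polynomial generator. -/
def tP (i : ℕ) : MvPolynomial MotVar k := X (Sum.inl i)

/-- `ξᵢ` as a polynomial generator, with the convention `ξ₀ = 1`. -/
def xP : ℕ → MvPolynomial MotVar k
  | 0 => 1
  | i + 1 => X (Sum.inr i)

variable (τ ρ : k)

/-- The ideal of defining relations `τᵢ² = τ·ξ_{i+1} + ρ·τ_{i+1} + ρ·τ₀·ξ_{i+1}`. -/
def relIdeal : Ideal (MvPolynomial MotVar k) :=
  Ideal.span (Set.range fun i : ℕ =>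
    tP k i ^ 2 - (C τ * xP k (i + 1) + C ρ * tP k (i + 1) + C ρ * tP k 0 * xP k (i + 1)))

/-- The mod 2 dual motivic Steenrod algebra over `k` (with `H_{*,*}` replaced by `k`). -/
abbrev DSA : Type := MvPolynomial MotVar k ⧸ relIdeal k τ ρ

/-- The canonical projection onto the dual Steenrod algebra. -/
def mkDSA : MvPolynomial MotVar k →+* DSA k τ ρ := Ideal.Quotient.mk _

/-- The monomial `τ^E ξ^R`, where `R i` records the exponent `r_{i+1}` of `ξ_{i+1}`. -/
def monP (E R : ℕ →₀ ℕ) : MvPolynomial MotVar k :=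
  (E.prod fun i e => tP k i ^ e) * (R.prod fun i r => xP k (i + 1) ^ r)

/-- The ideal `I(n) ⊆ 𝒜`, generated by the `τ_m` with `m ≥ n+1` and the `ξᵢ^{2^j}`
with `i ≥ 1`, `j ≥ 0`, `i + j ≥ n+1`. -/
def Iideal (n : ℤ) : Ideal (DSA k τ ρ) :=
  Ideal.span ({x | ∃ m : ℕ, n + 1 ≤ (m : ℤ) ∧ x = mkDSA k τ ρ (tP k m)} ∪
    {x | ∃ i j : ℕ, 1 ≤ i ∧ n + 1 ≤ (i : ℤ) + (j : ℤ) ∧ x = mkDSA k τ ρ (xP k i ^ 2 ^ j)})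

/-- The quotient `A(n) = 𝒜/I(n)`. -/
abbrev An (n : ℤ) : Type := DSA k τ ρ ⧸ Iideal k τ ρ n

/-- The ideal `J(n) ⊆ 𝒜`, generated by the `τ_m` with `m ≥ n+1` and the `ξᵢ^{2^j}`
with `i ≥ 2`, `j ≥ 0`, `i + j ≥ n+1`. -/
def Jideal (n : ℕ) : Ideal (DSA k τ ρ) :=
  Ideal.span ({x | ∃ m : ℕ, n + 1 ≤ m ∧ x = mkDSA k τ ρ (tP k m)} ∪
    {x | ∃ i j : ℕ, 2 ≤ i ∧ n + 1 ≤ i + j ∧ x = mkDSA k τ ρ (xP k i ^ 2 ^ j)})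

/-- The quotient `C(n) = 𝒜/J(n)`. -/
abbrev Cn (n : ℕ) : Type := DSA k τ ρ ⧸ Jideal k τ ρ n

/-!
In `C(n)` every element is a combination of normal monomials `τ^E ξ^R` with `E ⊆ {0, …, n}` a
set, `r₁` arbitrary and `r_{c+1} < 2^{n-c}` for `c ≥ 1`. On the free `k`-module on all pairs
`(E, R)` let `τᵢ` and `ξ_{c+1}` act by multiplication followed by reduction to normal form (`τᵢ²`
is rewritten with the defining relation, truncated variables are sent to `0`). These operators
commute (by induction on `E`) and satisfy the relations of `C(n)`, so `C(n)` acts on the model.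
Evaluation at the monomial `1` is injective, because reading `(E, R)` back as the class of
`τ^E ξ^R` is a left inverse. In the model `ξ₁` only raises `r₁`, so it acts injectively. The
kernel statement is `I(n) = J(n) + (ξ₁^{2^n})`.
-/

namespace NormalForm

open Finsupp (single)

variable {k}

variable (k) in
abbrev Model : Type := (Finset ℕ × (ℕ →₀ ℕ)) →₀ k

variable (k) in
/-- `mono k E R` stands for `τ^E ξ^R`, with `E` the (squarefree) set of `τ`-indices and `R c`
the exponent of `ξ_{c+1}`. -/
def mono (E : Finset ℕ) (R : ℕ →₀ ℕ) : Model k := single (E, R) 1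

/-- `ξ_{c+1} · ξ^R` is again a normal monomial of `C(n)`: `ξ₁` is free, and `ξ_{c+1}^{2^{n-c}} = 0`
for `c ≥ 1` (for `c > n` the truncated subtraction gives `2 ^ 0 = 1`, i.e. `ξ_{c+1} = 0`). -/
abbrev XiFits (n c : ℕ) (R : ℕ →₀ ℕ) : Prop := c = 0 ∨ R c + 2 ≤ 2 ^ (n - c)

theorem Model.hom_ext {M : Type} [AddCommMonoid M] [Module k M] {f g : Model k →ₗ[k] M}
    (h : ∀ E R, f (mono k E R) = g (mono k E R)) : f = g :=
  Finsupp.lhom_ext' fun p => LinearMap.ext_ring (h p.1 p.2)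

variable (n : ℕ)

variable (k) in
def xiOp (c : ℕ) : Module.End k (Model k) :=
  Finsupp.linearCombination k fun p => if XiFits n c p.2 then mono k p.1 (p.2 + single c 1) else 0

/-- `τᵢ · τ^E ξ^R` in normal form: `τᵢ²` is rewritten with the defining relation. -/
def tauMul (i : ℕ) (E : Finset ℕ) (R : ℕ →₀ ℕ) : Model k :=
  if i ≤ n then
    if hi : i ∈ E then
      τ • (if XiFits n i R then mono k (E.erase i) (R + single i 1) else 0) +
        ρ • tauMul (i + 1) (E.erase i) R +
        ρ • (if XiFits n i R then tauMul 0 (E.erase i) (R + single i 1) else 0)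
    else mono k (insert i E) R
  else 0
termination_by E.card
decreasing_by all_goals exact Finset.card_erase_lt_of_mem hi

def tauOp (i : ℕ) : Module.End k (Model k) :=
  Finsupp.linearCombination k fun p => tauMul τ ρ n i p.1 p.2

def tauSqOp (i : ℕ) : Module.End k (Model k) :=
  τ • xiOp k n i + ρ • tauOp τ ρ n (i + 1) + ρ • (tauOp τ ρ n 0 * xiOp k n i)

variable {τ ρ n}

theorem xiOp_mono (c : ℕ) (E : Finset ℕ) (R : ℕ →₀ ℕ) :
    xiOp k n c (mono k E R) = if XiFits n c R then mono k E (R + single c 1) else 0 := by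
  simp [xiOp, mono]

theorem tauOp_mono (i : ℕ) (E : Finset ℕ) (R : ℕ →₀ ℕ) :
    tauOp τ ρ n i (mono k E R) = tauMul τ ρ n i E R := by
  simp [tauOp, mono]

theorem tauOp_eq_zero {i : ℕ} (hi : n < i) : tauOp τ ρ n i = 0 :=
  Model.hom_ext fun E R => by rw [tauOp_mono, tauMul, if_neg hi.not_ge, LinearMap.zero_apply]

theorem tauOp_mono_of_notMem {i : ℕ} (hi : i ≤ n) {E : Finset ℕ} (hiE : i ∉ E) (R : ℕ →₀ ℕ) :
    tauOp τ ρ n i (mono k E R) = mono k (insert i E) R := by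
  rw [tauOp_mono, tauMul, if_pos hi, dif_neg hiE]

theorem tauOp_mono_of_mem {i : ℕ} (hi : i ≤ n) {E : Finset ℕ} (hiE : i ∈ E) (R : ℕ →₀ ℕ) :
    tauOp τ ρ n i (mono k E R) = tauSqOp τ ρ n i (mono k (E.erase i) R) := by
  rw [tauOp_mono, tauMul, if_pos hi, dif_pos hiE]
  split_ifs <;> simp [tauSqOp, xiOp_mono, tauOp_mono, *]

theorem tauOp_tauOp_mono {i : ℕ} (hi : i ≤ n) {E : Finset ℕ} (hiE : i ∉ E) (R : ℕ →₀ ℕ) :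
    tauOp τ ρ n i (tauOp τ ρ n i (mono k E R)) = tauSqOp τ ρ n i (mono k E R) := by
  rw [tauOp_mono_of_notMem hi hiE, tauOp_mono_of_mem hi (Finset.mem_insert_self i E),
    Finset.erase_insert hiE]

theorem tauOp_mono_erase {i : ℕ} (hi : i ≤ n) {E : Finset ℕ} (hiE : i ∈ E) (R : ℕ →₀ ℕ) :
    tauOp τ ρ n i (mono k (E.erase i) R) = mono k E R := by
  rw [tauOp_mono_of_notMem hi (Finset.notMem_erase i E), Finset.insert_erase hiE]

theorem xiFits_add_single_of_ne {c c' : ℕ} (h : c ≠ c') (R : ℕ →₀ ℕ) :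
    XiFits n c (R + single c' 1) ↔ XiFits n c R := by
  simp [XiFits, h.symm]

theorem xiOp_comm (c c' : ℕ) : xiOp k n c * xiOp k n c' = xiOp k n c' * xiOp k n c := by
  rcases eq_or_ne c c' with rfl | h
  · rfl
  refine Model.hom_ext fun E R => ?_
  simp only [Module.End.mul_apply, xiOp_mono, apply_ite (xiOp k n _), map_zero,
    xiFits_add_single_of_ne h, xiFits_add_single_of_ne h.symm]
  split_ifs <;> simp [add_right_comm]

theorem xiOp_tauSqOp {c i : ℕ} {y : Model k}
    (h : ∀ j, xiOp k n c (tauOp τ ρ n j y) = tauOp τ ρ n j (xiOp k n c y))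
    (h₀ : xiOp k n c (tauOp τ ρ n 0 (xiOp k n i y)) = tauOp τ ρ n 0 (xiOp k n c (xiOp k n i y))) :
    xiOp k n c (tauSqOp τ ρ n i y) = tauSqOp τ ρ n i (xiOp k n c y) := by
  simp only [tauSqOp, LinearMap.add_apply, LinearMap.smul_apply, Module.End.mul_apply, map_add,
    map_smul, h, h₀]
  rw [← Module.End.mul_apply (xiOp k n c), xiOp_comm, Module.End.mul_apply]

theorem xiOp_tauOp_mono (E : Finset ℕ) (R : ℕ →₀ ℕ) (c i : ℕ) :
    xiOp k n c (tauOp τ ρ n i (mono k E R)) = tauOp τ ρ n i (xiOp k n c (mono k E R)) := by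
  induction E using Finset.strongInduction generalizing R c i with
  | H E ih =>
  rcases le_or_gt i n with hi | hi
  swap
  · simp [tauOp_eq_zero hi]
  by_cases hiE : i ∈ E
  · have ih' := ih _ (Finset.erase_ssubset hiE)
    have h₀ : xiOp k n c (tauOp τ ρ n 0 (xiOp k n i (mono k (E.erase i) R))) =
        tauOp τ ρ n 0 (xiOp k n c (xiOp k n i (mono k (E.erase i) R))) := by
      rw [xiOp_mono]
      split_ifs <;> simp [ih']
    rw [tauOp_mono_of_mem hi hiE, xiOp_tauSqOp (ih' R c) h₀, xiOp_mono, xiOp_mono]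
    split_ifs <;> simp [tauOp_mono_of_mem hi hiE]
  · simp only [tauOp_mono_of_notMem hi hiE, xiOp_mono, apply_ite (tauOp τ ρ n i), map_zero]

theorem xiOp_tauOp_comm (c i : ℕ) :
    xiOp k n c * tauOp τ ρ n i = tauOp τ ρ n i * xiOp k n c :=
  Model.hom_ext fun E R => xiOp_tauOp_mono E R c i

theorem tauOp_tauSqOp {a b : ℕ} {y : Model k}
    (h : ∀ j, tauOp τ ρ n b (tauOp τ ρ n j y) = tauOp τ ρ n j (tauOp τ ρ n b y))
    (h₀ : tauOp τ ρ n b (tauOp τ ρ n 0 (xiOp k n a y)) =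
      tauOp τ ρ n 0 (tauOp τ ρ n b (xiOp k n a y))) :
    tauOp τ ρ n b (tauSqOp τ ρ n a y) = tauSqOp τ ρ n a (tauOp τ ρ n b y) := by
  simp only [tauSqOp, LinearMap.add_apply, LinearMap.smul_apply, Module.End.mul_apply, map_add,
    map_smul, h, h₀]
  rw [← Module.End.mul_apply (tauOp τ ρ n b), ← xiOp_tauOp_comm, Module.End.mul_apply]

theorem tauSqOp_comm {i j : ℕ} {y : Model k}
    (h : ∀ a b, tauOp τ ρ n a (tauOp τ ρ n b y) = tauOp τ ρ n b (tauOp τ ρ n a y))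
    (hξ : ∀ c a b, tauOp τ ρ n a (tauOp τ ρ n b (xiOp k n c y)) =
      tauOp τ ρ n b (tauOp τ ρ n a (xiOp k n c y))) :
    tauSqOp τ ρ n i (tauSqOp τ ρ n j y) = tauSqOp τ ρ n j (tauSqOp τ ρ n i y) := by
  have hξτ : ∀ c a (w : Model k), xiOp k n c (tauOp τ ρ n a w) = tauOp τ ρ n a (xiOp k n c w) :=
    fun c a w => by rw [← Module.End.mul_apply, xiOp_tauOp_comm, Module.End.mul_apply]
  have hξξ : xiOp k n i (xiOp k n j y) = xiOp k n j (xiOp k n i y) := by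
    rw [← Module.End.mul_apply, xiOp_comm, Module.End.mul_apply]
  simp only [tauSqOp, LinearMap.add_apply, LinearMap.smul_apply, Module.End.mul_apply, map_add,
    map_smul, hξτ]
  rw [hξξ, h (i + 1) (j + 1), hξ j (i + 1) 0, hξ i (j + 1) 0]
  module

variable (τ ρ n) in
def TauCommuteAt (E : Finset ℕ) : Prop :=
  ∀ R i j, tauOp τ ρ n i (tauOp τ ρ n j (mono k E R)) = tauOp τ ρ n j (tauOp τ ρ n i (mono k E R))

theorem TauCommuteAt.xiOp {E : Finset ℕ} (h : TauCommuteAt τ ρ n E) (R : ℕ →₀ ℕ) (c i j : ℕ) :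
    tauOp τ ρ n i (tauOp τ ρ n j (xiOp k n c (mono k E R))) =
      tauOp τ ρ n j (tauOp τ ρ n i (xiOp k n c (mono k E R))) := by
  rw [xiOp_mono]
  split_ifs
  · exact h _ i j
  · simp

theorem tauOp_tauOp_mono_of_mem {i j : ℕ} (hj : j ≤ n) {E : Finset ℕ} (hjE : j ∈ E)
    (h : TauCommuteAt τ ρ n (E.erase j)) (R : ℕ →₀ ℕ) :
    tauOp τ ρ n i (tauOp τ ρ n j (mono k E R)) =
      tauSqOp τ ρ n j (tauOp τ ρ n i (mono k (E.erase j) R)) := by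
  rw [← tauOp_mono_erase hj hjE, tauOp_tauOp_mono hj (Finset.notMem_erase j E)]
  exact tauOp_tauSqOp (h R i) (h.xiOp R j i 0)

theorem tauCommuteAt (E : Finset ℕ) : TauCommuteAt τ ρ n E := by
  induction E using Finset.strongInduction with
  | H E ih =>
  intro R i j
  rcases eq_or_ne i j with rfl | hij
  · rfl
  rcases le_or_gt i n with hi | hi
  swap
  · simp [tauOp_eq_zero hi]
  rcases le_or_gt j n with hj | hj
  swap
  · simp [tauOp_eq_zero hj]
  by_cases hiE : i ∈ E <;> by_cases hjE : j ∈ E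
  · have hij' : i ∈ E.erase j := Finset.mem_erase.2 ⟨hij, hiE⟩
    have hji' : j ∈ E.erase i := Finset.mem_erase.2 ⟨hij.symm, hjE⟩
    -- both sides reduce to the two `tauSqOp`s applied to `τ^(E \ {i, j}) ξ^R`, in either order
    rw [tauOp_tauOp_mono_of_mem hj hjE (ih _ (Finset.erase_ssubset hjE)),
      tauOp_tauOp_mono_of_mem hi hiE (ih _ (Finset.erase_ssubset hiE)),
      tauOp_mono_of_mem hi hij', tauOp_mono_of_mem hj hji', Finset.erase_right_comm]
    have hD := ih ((E.erase i).erase j)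
      ((Finset.erase_ssubset hji').trans (Finset.erase_ssubset hiE))
    exact tauSqOp_comm (hD R) (hD.xiOp R)
  · rw [tauOp_tauOp_mono_of_mem hi hiE (ih _ (Finset.erase_ssubset hiE)),
      tauOp_mono_of_notMem hj hjE, tauOp_mono_of_mem hi (Finset.mem_insert_of_mem hiE),
      Finset.erase_insert_of_ne hij.symm, ← tauOp_mono_of_notMem hj
        (fun h => hjE (Finset.mem_of_mem_erase h))]
  · rw [tauOp_tauOp_mono_of_mem hj hjE (ih _ (Finset.erase_ssubset hjE)),
      tauOp_mono_of_notMem hi hiE, tauOp_mono_of_mem hj (Finset.mem_insert_of_mem hjE),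
      Finset.erase_insert_of_ne hij, ← tauOp_mono_of_notMem hi
        (fun h => hiE (Finset.mem_of_mem_erase h))]
  · rw [tauOp_mono_of_notMem hj hjE, tauOp_mono_of_notMem hi hiE,
      tauOp_mono_of_notMem hi (fun h => hiE (Finset.mem_of_mem_insert_of_ne h hij)),
      tauOp_mono_of_notMem hj (fun h => hjE (Finset.mem_of_mem_insert_of_ne h hij.symm)),
      Finset.insert_comm]

theorem tauOp_comm (i j : ℕ) : tauOp τ ρ n i * tauOp τ ρ n j = tauOp τ ρ n j * tauOp τ ρ n i :=
  Model.hom_ext fun E R => tauCommuteAt E R i j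

theorem xiOp_pow_succ_mono_eq_zero {c : ℕ} (hc : c ≠ 0) (E : Finset ℕ) (m : ℕ) (R : ℕ →₀ ℕ)
    (hm : 2 ^ (n - c) ≤ R c + m + 1) : (xiOp k n c ^ (m + 1)) (mono k E R) = 0 := by
  induction m generalizing R with
  | zero => rw [pow_one, xiOp_mono, if_neg (by omega)]
  | succ m ih =>
    rw [pow_succ, Module.End.mul_apply, xiOp_mono]
    split_ifs
    · exact ih _ (by simp; omega)
    · exact map_zero _

theorem xiOp_pow_eq_zero {c m : ℕ} (hc : c ≠ 0) (hm : 2 ^ (n - c) ≤ m) : xiOp k n c ^ m = 0 := by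
  obtain ⟨m, rfl⟩ : ∃ m', m = m' + 1 := ⟨m - 1, by have := Nat.one_le_two_pow (n := n - c); omega⟩
  exact Model.hom_ext fun E R => xiOp_pow_succ_mono_eq_zero hc E m R (by omega)

theorem tauOp_mul_self (i : ℕ) : tauOp τ ρ n i * tauOp τ ρ n i = tauSqOp τ ρ n i := by
  refine Model.hom_ext fun E R => ?_
  rw [Module.End.mul_apply]
  rcases le_or_gt i n with hi | hi
  · by_cases hiE : i ∈ E
    · conv_lhs => rw [tauOp_mono_of_mem hi hiE]
      rw [tauOp_tauSqOp (tauCommuteAt _ R i) ((tauCommuteAt _).xiOp R i i 0),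
        tauOp_mono_erase hi hiE]
    · exact tauOp_tauOp_mono hi hiE R
  · have hξ : xiOp k n i (mono k E R) = 0 := by
      rw [xiOp_mono, if_neg (by simp [XiFits, Nat.sub_eq_zero_of_le hi.le]; omega)]
    simp [tauSqOp, tauOp_eq_zero hi, tauOp_eq_zero (Nat.lt_succ_of_lt hi), hξ]

theorem xiOp_zero_injective : Function.Injective (xiOp k n 0) := by
  have h : xiOp k n 0 =
      Finsupp.lmapDomain k k fun p : Finset ℕ × (ℕ →₀ ℕ) => (p.1, p.2 + single 0 1) :=
    Model.hom_ext fun E R => by rw [xiOp_mono, if_pos (Or.inl rfl)]; simp [mono]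
  rw [h]
  exact Finsupp.mapDomain_injective fun p q hpq => by simpa [Prod.ext_iff] using hpq

variable (τ ρ n) in
def varOp : MotVar → Module.End k (Model k)
  | Sum.inl i => tauOp τ ρ n i
  | Sum.inr c => xiOp k n c

theorem varOp_comm (v w : MotVar) : varOp τ ρ n v * varOp τ ρ n w = varOp τ ρ n w * varOp τ ρ n v := by
  rcases v with i | c <;> rcases w with j | c'
  · exact tauOp_comm i j
  · exact (xiOp_tauOp_comm c' i).symm
  · exact xiOp_tauOp_comm c j
  · exact xiOp_comm c c'

instance : IsMulCommutative (Algebra.adjoin k (Set.range (varOp τ ρ n))) :=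
  Algebra.isMulCommutative_adjoin k (by rintro _ ⟨v, rfl⟩ _ ⟨w, rfl⟩; exact varOp_comm v w)

open scoped IsMulCommutative in
variable (τ ρ n) in
def polyAct : MvPolynomial MotVar k →ₐ[k] Module.End k (Model k) :=
  (Algebra.adjoin k (Set.range (varOp τ ρ n))).val.comp
    (aeval fun v => ⟨varOp τ ρ n v, Algebra.subset_adjoin (Set.mem_range_self v)⟩)

theorem polyAct_X (v : MotVar) : polyAct τ ρ n (X v) = varOp τ ρ n v := by
  simp [polyAct]

theorem polyAct_tP (i : ℕ) : polyAct τ ρ n (tP k i) = tauOp τ ρ n i :=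
  polyAct_X (Sum.inl i)

theorem polyAct_xP_succ (c : ℕ) : polyAct τ ρ n (xP k (c + 1)) = xiOp k n c :=
  polyAct_X (Sum.inr c)

theorem relIdeal_le_ker_polyAct : relIdeal k τ ρ ≤ RingHom.ker (polyAct τ ρ n) := by
  refine Ideal.span_le.2 ?_
  rintro _ ⟨i, rfl⟩
  rw [SetLike.mem_coe, RingHom.mem_ker, map_sub, sub_eq_zero, sq, map_mul, polyAct_tP,
    tauOp_mul_self]
  simp [tauSqOp, polyAct_tP, polyAct_xP_succ, ← MvPolynomial.algebraMap_eq, Algebra.smul_def,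
    mul_assoc]

variable (τ ρ n) in
def dsaAct : DSA k τ ρ →+* Module.End k (Model k) :=
  Ideal.Quotient.lift _ (polyAct τ ρ n) fun _ hp => relIdeal_le_ker_polyAct hp

theorem dsaAct_mkDSA (p : MvPolynomial MotVar k) : dsaAct τ ρ n (mkDSA k τ ρ p) = polyAct τ ρ n p :=
  Ideal.Quotient.lift_mk _ _ _

theorem Jideal_le_ker_dsaAct : Jideal k τ ρ n ≤ RingHom.ker (dsaAct τ ρ n) := by
  refine Ideal.span_le.2 ?_
  rintro _ (⟨m, hm, rfl⟩ | ⟨i, j, hi, hij, rfl⟩) <;>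
    rw [SetLike.mem_coe, RingHom.mem_ker, dsaAct_mkDSA]
  · rw [polyAct_tP]
    exact tauOp_eq_zero hm
  · obtain ⟨c, rfl⟩ : ∃ c, i = c + 1 := ⟨i - 1, by omega⟩
    rw [map_pow, polyAct_xP_succ]
    exact xiOp_pow_eq_zero (by omega) (Nat.pow_le_pow_right two_pos (by omega))

variable (τ ρ n) in
def cnAct : Cn k τ ρ n →+* Module.End k (Model k) :=
  Ideal.Quotient.lift _ (dsaAct τ ρ n) fun _ ha => Jideal_le_ker_dsaAct ha

variable (τ ρ n) in
def mkCn : MvPolynomial MotVar k →ₐ[k] Cn k τ ρ n :=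
  (Ideal.Quotient.mkₐ k (Jideal k τ ρ n)).comp (Ideal.Quotient.mkₐ k (relIdeal k τ ρ))

theorem mkCn_apply (p : MvPolynomial MotVar k) :
    mkCn τ ρ n p = Ideal.Quotient.mk (Jideal k τ ρ n) (mkDSA k τ ρ p) :=
  rfl

theorem mkCn_surjective : Function.Surjective (mkCn τ ρ n) :=
  (Ideal.Quotient.mk_surjective).comp Ideal.Quotient.mk_surjective

theorem cnAct_mkCn (p : MvPolynomial MotVar k) : cnAct τ ρ n (mkCn τ ρ n p) = polyAct τ ρ n p :=
  rfl

theorem mkCn_tP_sq (i : ℕ) : mkCn τ ρ n (tP k i ^ 2) =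
    mkCn τ ρ n (C τ * xP k (i + 1) + C ρ * tP k (i + 1) + C ρ * tP k 0 * xP k (i + 1)) := by
  rw [mkCn_apply, mkCn_apply, mkDSA]
  congr 1
  exact (Ideal.Quotient.mk_eq_mk_iff_sub_mem _ _).2 (Ideal.subset_span (Set.mem_range_self i))

theorem mkCn_tP_eq_zero {i : ℕ} (hi : n < i) : mkCn τ ρ n (tP k i) = 0 :=
  Ideal.Quotient.eq_zero_iff_mem.2 (Ideal.subset_span (Or.inl ⟨i, hi, rfl⟩))

theorem mkCn_xP_pow_eq_zero {c : ℕ} (hc : c ≠ 0) : mkCn τ ρ n (xP k (c + 1) ^ 2 ^ (n - c)) = 0 :=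
  Ideal.Quotient.eq_zero_iff_mem.2
    (Ideal.subset_span (Or.inr ⟨c + 1, n - c, by omega, by omega, rfl⟩))

variable (k) in
def monomialOf (E : Finset ℕ) (R : ℕ →₀ ℕ) : MvPolynomial MotVar k :=
  (∏ i ∈ E, tP k i) * R.prod fun c r => xP k (c + 1) ^ r

theorem monomialOf_empty_zero : monomialOf k ∅ 0 = 1 := by
  simp [monomialOf]

theorem monomialOf_insert {i : ℕ} {E : Finset ℕ} (hiE : i ∉ E) (R : ℕ →₀ ℕ) :
    monomialOf k (insert i E) R = tP k i * monomialOf k E R := by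
  rw [monomialOf, monomialOf, Finset.prod_insert hiE, mul_assoc]

theorem monomialOf_add_single (E : Finset ℕ) (R : ℕ →₀ ℕ) (c m : ℕ) :
    monomialOf k E (R + single c m) = xP k (c + 1) ^ m * monomialOf k E R := by
  rw [monomialOf, monomialOf,
    Finsupp.prod_add_index' (fun _ => pow_zero _) fun _ _ _ => pow_add _ _ _,
    Finsupp.prod_single_index (h := fun c r => xP k (c + 1) ^ r) (pow_zero _)]
  ring

variable {A : Type} [CommRing A] [Algebra k A] {f : MvPolynomial MotVar k →ₐ[k] A}

variable (τ ρ n f) in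
structure SatisfiesCnRelations : Prop where
  tP_eq_zero {m : ℕ} : n < m → f (tP k m) = 0
  xP_pow_eq_zero {c : ℕ} : c ≠ 0 → f (xP k (c + 1) ^ 2 ^ (n - c)) = 0
  tP_sq (i : ℕ) : f (tP k i ^ 2) =
    f (C τ * xP k (i + 1) + C ρ * tP k (i + 1) + C ρ * tP k 0 * xP k (i + 1))

/- The ring instances of the iterated quotient `Cn` agree with those reached from a generic
`CommRing` only after unfolding: hence `A := Cn k τ ρ n` is given explicitly, and in `Cn` ring
identities are applied as terms instead of through `rw`/`simp`. -/
theorem satisfiesCnRelations_mkCn : SatisfiesCnRelations (A := Cn k τ ρ n) τ ρ n (mkCn τ ρ n) where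
  tP_eq_zero := mkCn_tP_eq_zero
  xP_pow_eq_zero := mkCn_xP_pow_eq_zero
  tP_sq := mkCn_tP_sq

theorem SatisfiesCnRelations.monomialOf_eq_zero (hf : SatisfiesCnRelations τ ρ n f) {c : ℕ}
    {R : ℕ →₀ ℕ} (h : ¬XiFits n c R) (E : Finset ℕ) :
    f (monomialOf k E (R + single c 1)) = 0 := by
  have hR : R + single c 1 = R.erase c + single c (2 ^ (n - c) + (R c + 1 - 2 ^ (n - c))) := by
    ext a
    rcases eq_or_ne a c with rfl | h <;> simp [*]
    omega
  rw [hR, monomialOf_add_single, pow_add, map_mul, map_mul, hf.xP_pow_eq_zero (by omega), zero_mul,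
    zero_mul]

variable (f) in
def realize : Model k →ₗ[k] A :=
  Finsupp.linearCombination k fun p => f (monomialOf k p.1 p.2)

theorem realize_mono (E : Finset ℕ) (R : ℕ →₀ ℕ) :
    realize f (mono k E R) = f (monomialOf k E R) := by
  simp [realize, mono]

theorem SatisfiesCnRelations.realize_xiOp (hf : SatisfiesCnRelations τ ρ n f) (c : ℕ)
    (x : Model k) :
    realize f (xiOp k n c x) = f (xP k (c + 1)) * realize f x := by
  have h : realize f ∘ₗ xiOp k n c = LinearMap.mulLeft k (f (xP k (c + 1))) ∘ₗ realize f := by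
    refine Model.hom_ext fun E R => ?_
    simp only [LinearMap.comp_apply, LinearMap.mulLeft_apply, xiOp_mono, realize_mono]
    split_ifs with hc
    · rw [realize_mono, monomialOf_add_single, pow_one, map_mul]
    · rw [map_zero, ← map_mul, ← pow_one (xP k (c + 1)), ← monomialOf_add_single,
        hf.monomialOf_eq_zero hc]
  exact LinearMap.congr_fun h x

theorem SatisfiesCnRelations.realize_tauSqOp (hf : SatisfiesCnRelations τ ρ n f) {i : ℕ}
    {y : Model k}
    (h : ∀ j, realize f (tauOp τ ρ n j y) = f (tP k j) * realize f y)
    (h₀ : realize f (tauOp τ ρ n 0 (xiOp k n i y)) = f (tP k 0) * realize f (xiOp k n i y)) :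
    realize f (tauSqOp τ ρ n i y) = f (tP k i ^ 2) * realize f y := by
  simp only [tauSqOp, LinearMap.add_apply, LinearMap.smul_apply, Module.End.mul_apply, map_add,
    map_smul, h, h₀, hf.realize_xiOp]
  simp only [hf.tP_sq, map_add, map_mul, ← MvPolynomial.algebraMap_eq, AlgHom.commutes,
    Algebra.smul_def]
  ring

theorem SatisfiesCnRelations.realize_tauOp_mono (hf : SatisfiesCnRelations τ ρ n f)
    (E : Finset ℕ) (R : ℕ →₀ ℕ) (i : ℕ) :
    realize f (tauOp τ ρ n i (mono k E R)) = f (tP k i) * realize f (mono k E R) := by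
  induction E using Finset.strongInduction generalizing R i with
  | H E ih =>
  rcases le_or_gt i n with hi | hi
  swap
  · simp [tauOp_eq_zero hi, hf.tP_eq_zero hi]
  by_cases hiE : i ∈ E
  · have ih' := ih _ (Finset.erase_ssubset hiE)
    have h₀ : realize f (tauOp τ ρ n 0 (xiOp k n i (mono k (E.erase i) R))) =
        f (tP k 0) * realize f (xiOp k n i (mono k (E.erase i) R)) := by
      rw [xiOp_mono]
      split_ifs
      · exact ih' _ 0
      · simp
    rw [tauOp_mono_of_mem hi hiE, hf.realize_tauSqOp (ih' R) h₀, ← tauOp_mono_erase hi hiE, ih',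
      map_pow, sq, mul_assoc]
  · rw [tauOp_mono_of_notMem hi hiE, realize_mono, realize_mono, monomialOf_insert hiE, map_mul]

theorem SatisfiesCnRelations.realize_tauOp (hf : SatisfiesCnRelations τ ρ n f) (i : ℕ)
    (x : Model k) :
    realize f (tauOp τ ρ n i x) = f (tP k i) * realize f x := by
  have h : realize f ∘ₗ tauOp τ ρ n i = LinearMap.mulLeft k (f (tP k i)) ∘ₗ realize f :=
    Model.hom_ext fun E R => hf.realize_tauOp_mono E R i
  exact LinearMap.congr_fun h x

theorem SatisfiesCnRelations.realize_polyAct (hf : SatisfiesCnRelations τ ρ n f)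
    (p : MvPolynomial MotVar k) (x : Model k) :
    realize f (polyAct τ ρ n p x) = f p * realize f x := by
  induction p using MvPolynomial.induction_on generalizing x with
  | C r =>
    rw [← MvPolynomial.algebraMap_eq, AlgHom.commutes, AlgHom.commutes, Module.algebraMap_end_apply,
      map_smul, Algebra.smul_def]
  | add p q hp hq => rw [map_add, LinearMap.add_apply, map_add, hp, hq, map_add, add_mul]
  | mul_X p v hp =>
    rw [map_mul, Module.End.mul_apply, hp, polyAct_X, map_mul, mul_assoc]
    rcases v with i | c
    · exact congrArg _ (hf.realize_tauOp i x)
    · exact congrArg _ (hf.realize_xiOp c x)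

theorem realize_mkCn_cnAct (a : Cn k τ ρ n) (x : Model k) :
    realize (A := Cn k τ ρ n) (mkCn τ ρ n) (cnAct τ ρ n a x) =
      a * realize (A := Cn k τ ρ n) (mkCn τ ρ n) x := by
  obtain ⟨p, rfl⟩ := mkCn_surjective a
  exact satisfiesCnRelations_mkCn.realize_polyAct p x

theorem cnAct_apply_one_injective :
    Function.Injective fun a : Cn k τ ρ n => cnAct τ ρ n a (mono k ∅ 0) := by
  intro a b hab
  have h := congrArg (realize (A := Cn k τ ρ n) (mkCn τ ρ n)) hab
  simp only [realize_mkCn_cnAct, realize_mono, monomialOf_empty_zero, map_one] at h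
  exact (mul_one a).symm.trans (h.trans (mul_one b))

theorem cnAct_mk_xP_one_pow :
    cnAct τ ρ n (Ideal.Quotient.mk (Jideal k τ ρ n) (mkDSA k τ ρ (xP k 1 ^ 2 ^ n))) =
      xiOp k n 0 ^ 2 ^ n := by
  rw [← mkCn_apply, cnAct_mkCn, map_pow, polyAct_xP_succ]

theorem cnAct_mul_apply (a b : Cn k τ ρ n) (x : Model k) :
    cnAct τ ρ n (a * b) x = cnAct τ ρ n b (cnAct τ ρ n a x) :=
  (congrArg (fun c => cnAct τ ρ n c x) (mul_comm a b)).trans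
    (congrArg (fun g => g x) (map_mul (cnAct τ ρ n) b a))

theorem mul_mk_xP_one_pow_injective : Function.Injective fun x : Cn k τ ρ n =>
    x * Ideal.Quotient.mk (Jideal k τ ρ n) (mkDSA k τ ρ (xP k 1 ^ 2 ^ n)) := by
  intro a b hab
  have h := congrArg (fun x => cnAct τ ρ n x (mono k ∅ 0)) hab
  simp only [cnAct_mul_apply, cnAct_mk_xP_one_pow, Module.End.coe_pow] at h
  exact cnAct_apply_one_injective ((xiOp_zero_injective.iterate _) h)

end NormalForm

theorem Jideal_le_Iideal (n : ℕ) : Jideal k τ ρ n ≤ Iideal k τ ρ n := by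
  refine Ideal.span_le.2 ?_
  rintro _ (⟨m, hm, rfl⟩ | ⟨i, j, hi, hij, rfl⟩)
  · exact Ideal.subset_span (Or.inl ⟨m, by exact_mod_cast hm, rfl⟩)
  · exact Ideal.subset_span (Or.inr ⟨i, j, by omega, by exact_mod_cast hij, rfl⟩)

theorem Iideal_eq_Jideal_sup (n : ℕ) :
    Iideal k τ ρ n = Jideal k τ ρ n ⊔ Ideal.span {mkDSA k τ ρ (xP k 1 ^ 2 ^ n)} := by
  refine le_antisymm (Ideal.span_le.2 ?_) (sup_le (Jideal_le_Iideal k τ ρ n) ?_)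
  · rintro _ (⟨m, hm, rfl⟩ | ⟨i, j, hi, hij, rfl⟩)
    · exact Ideal.mem_sup_left (Ideal.subset_span (Or.inl ⟨m, by omega, rfl⟩))
    rcases eq_or_lt_of_le hi with rfl | hi
    · have hj : n ≤ j := by omega
      refine Ideal.mem_sup_right
        (Ideal.mem_span_singleton.2 ⟨mkDSA k τ ρ (xP k 1 ^ (2 ^ j - 2 ^ n)), ?_⟩)
      rw [← map_mul, ← pow_add, Nat.add_sub_cancel' (Nat.pow_le_pow_right two_pos hj)]
    · exact Ideal.mem_sup_left (Ideal.subset_span (Or.inr ⟨i, j, hi, by omega, rfl⟩))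
  · exact Ideal.span_le.2 (Set.singleton_subset_iff.2
      (Ideal.subset_span (Or.inr ⟨1, n, le_rfl, by push_cast; omega, rfl⟩)))

theorem statement8 (k : Type) [CommRing k] (τ ρ : k) (n : ℕ) :
    Function.Injective (fun x : Cn k τ ρ n =>
      x * Ideal.Quotient.mk (Jideal k τ ρ n) (mkDSA k τ ρ (xP k 1 ^ 2 ^ n))) ∧
    ∃ φ : Cn k τ ρ n →+* An k τ ρ n,
      (∀ y : DSA k τ ρ,
        φ (Ideal.Quotient.mk (Jideal k τ ρ n) y) = Ideal.Quotient.mk (Iideal k τ ρ n) y) ∧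
      Function.Surjective φ ∧
      RingHom.ker φ =
        Ideal.span {Ideal.Quotient.mk (Jideal k τ ρ n) (mkDSA k τ ρ (xP k 1 ^ 2 ^ n))} := by
  refine ⟨NormalForm.mul_mk_xP_one_pow_injective, Ideal.Quotient.factor (Jideal_le_Iideal k τ ρ n),
    Ideal.Quotient.factor_mk _, Ideal.Quotient.factor_surjective _, ?_⟩
  rw [Ideal.Quotient.factor_ker, Iideal_eq_Jideal_sup, Ideal.map_sup, Ideal.map_quotient_self,
    bot_sup_eq, Ideal.map_span, Set.image_singleton]

end
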